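/- arXiv:2504.07820 — 3 statements merged into one kernel-verified Lean document; each statement's English description precedes it below -/
import Mathlib

section
/- For the centered cardinal cubic B-spline M₄, the convolution abs * M₄ equals (1/20)|x|⁵ − (1/6)x⁴ + (2/3)x² + 7/15 for |x| ≤ 1, equals (1/60)(2−|x|)⁵ + |x| for 1 ≤ |x| ≤ 2, and equals |x| for |x| ≥ 2. -/
open MeasureTheory

/-- The centered cardinal cubic B-spline of order 4. -/
noncomputable def M4 (x : ℝ) : ℝ :=
  if |x| ≤ 1 then (1 / 6) * (3 * |x| ^ 3 - 6 * x ^ 2 + 4)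
  else if |x| ≤ 2 then (1 / 6) * (2 - |x|) ^ 3
  else 0

/-! For `x ≥ 0`, folding the integral at `0` by evenness of `M4` gives
`∫ |x - y| M4 y = 2 ∫₀² max x y M4 y = 2 (x ∫₀ˣ M4 + ∫ₓ² y M4 y)`; both integrals are
integrals of polynomials over the pieces `[0, 1]` and `[1, 2]` of `M4`, computed by the
fundamental theorem of calculus. Negative `x` follow because the left-hand side is even in `x`. -/

open Set intervalIntegral

lemma M4_neg (y : ℝ) : M4 (-y) = M4 y := by
  simp only [M4, abs_neg, neg_sq]

lemma continuous_M4 : Continuous M4 := by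
  refine Continuous.if_le (by fun_prop) ?_ continuous_abs continuous_const fun x hx => ?_
  · exact Continuous.if_le (by fun_prop) continuous_const continuous_abs continuous_const
      fun x hx => by rw [hx]; norm_num
  · have hx2 : x ^ 2 = 1 := by rw [← sq_abs, hx]; norm_num
    rw [if_pos (by rw [hx]; norm_num), hx, hx2]; norm_num

lemma M4_of_nonneg_of_le_one {y : ℝ} (h0 : 0 ≤ y) (h1 : y ≤ 1) :
    M4 y = (3 * y ^ 3 - 6 * y ^ 2 + 4) / 6 := by
  rw [M4, abs_of_nonneg h0, if_pos h1]; ring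

lemma M4_of_one_le_of_le_two {y : ℝ} (h1 : 1 ≤ y) (h2 : y ≤ 2) :
    M4 y = (2 - y) ^ 3 / 6 := by
  rcases h1.eq_or_lt with rfl | h1
  · norm_num [M4]
  · rw [M4, abs_of_nonneg (by linarith), if_neg h1.not_ge, if_pos h2]; ring

lemma M4_of_two_le_abs {y : ℝ} (h : 2 ≤ |y|) : M4 y = 0 := by
  rcases h.eq_or_lt with h | h
  · norm_num [M4, ← h]
  · rw [M4, if_neg (by linarith), if_neg h.not_ge]

/-- Folding at `0`: for `x, y ≥ 0` the points `y` and `-y` contribute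
`(|x + y| + |x - y|) φ y = 2 max x y φ y`. -/
lemma integral_abs_sub_mul_of_even {φ : ℝ → ℝ} (hφ : Continuous φ) (heven : ∀ y, φ (-y) = φ y)
    {x R : ℝ} (hx : 0 ≤ x) (hR : 0 ≤ R) :
    ∫ y in -R..R, |x - y| * φ y = 2 * ∫ y in 0..R, max x y * φ y := by
  have hint : ∀ a b, IntervalIntegrable (fun y => |x - y| * φ y) volume a b :=
    fun a b => (by fun_prop : Continuous fun y => |x - y| * φ y).intervalIntegrable a b
  have hreflect : ∫ y in -R..0, |x - y| * φ y = ∫ y in 0..R, |x + y| * φ y := by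
    simpa [heven] using (integral_comp_neg (a := 0) (b := R) fun y => |x - y| * φ y).symm
  rw [← integral_add_adjacent_intervals (hint (-R) 0) (hint 0 R), hreflect,
    ← integral_add ((by fun_prop : Continuous fun y => |x + y| * φ y).intervalIntegrable 0 R)
      (hint 0 R), ← intervalIntegral.integral_const_mul]
  refine intervalIntegral.integral_congr fun y hy => ?_
  rw [uIcc_of_le hR] at hy
  rcases le_total x y with hxy | hxy
  · rw [max_eq_right hxy, abs_of_nonneg (add_nonneg hx hy.1), abs_of_nonpos (sub_nonpos.2 hxy)]
    ring
  · rw [max_eq_left hxy, abs_of_nonneg (add_nonneg hx hy.1), abs_of_nonneg (sub_nonneg.2 hxy)]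
    ring

lemma integral_max_mul_of_forall_ge_eq_zero {φ : ℝ → ℝ} (hφ : Continuous φ) {x R : ℝ}
    (hvanish : ∀ y, R ≤ y → φ y = 0) (hx : 0 ≤ x) :
    ∫ y in 0..R, max x y * φ y = x * (∫ y in 0..x, φ y) + ∫ y in x..R, y * φ y := by
  have hint : ∀ a b, IntervalIntegrable (fun y => max x y * φ y) volume a b :=
    fun a b => (by fun_prop : Continuous fun y => max x y * φ y).intervalIntegrable a b
  have hleft : ∫ y in 0..x, max x y * φ y = x * ∫ y in 0..x, φ y := by
    rw [← intervalIntegral.integral_const_mul]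
    refine intervalIntegral.integral_congr fun y hy => ?_
    rw [uIcc_of_le hx] at hy
    simp only [max_eq_left hy.2]
  have hright : ∫ y in x..R, max x y * φ y = ∫ y in x..R, y * φ y := by
    refine intervalIntegral.integral_congr fun y hy => ?_
    rcases le_total x R with hxR | hRx
    · rw [uIcc_of_le hxR] at hy
      simp only [max_eq_right hy.1]
    · rw [uIcc_of_ge hRx] at hy
      simp only [hvanish y hy.1, mul_zero]
  rw [← integral_add_adjacent_intervals (hint 0 x) (hint x R), hleft, hright]

lemma integral_mul_M4_eq_intervalIntegral (f : ℝ → ℝ) :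
    ∫ y, f y * M4 y = ∫ y in -2..2, f y * M4 y := by
  refine (integral_eq_integral_of_support_subset fun y hy => ?_).symm
  by_contra hy'
  have h2 : 2 ≤ |y| := by
    rw [mem_Ioc, not_and_or, not_lt, not_le] at hy'
    rcases hy' with h | h
    · rw [abs_of_neg (by linarith)]; linarith
    · rw [abs_of_pos (by linarith)]; linarith
  exact hy (by simp only [M4_of_two_le_abs h2, mul_zero])

lemma integral_abs_sub_mul_M4_of_nonneg {x : ℝ} (hx : 0 ≤ x) :
    ∫ y, |x - y| * M4 y = 2 * (x * (∫ y in 0..x, M4 y) + ∫ y in x..2, y * M4 y) := by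
  rw [integral_mul_M4_eq_intervalIntegral,
    integral_abs_sub_mul_of_even continuous_M4 M4_neg hx zero_le_two,
    integral_max_mul_of_forall_ge_eq_zero continuous_M4
      (fun y hy => M4_of_two_le_abs (hy.trans (le_abs_self y))) hx]

lemma integral_M4_of_le_one {x : ℝ} (h0 : 0 ≤ x) (h1 : x ≤ 1) :
    ∫ y in 0..x, M4 y = 2 * x / 3 - x ^ 3 / 3 + x ^ 4 / 8 := by
  have hderiv : ∀ y ∈ uIcc 0 x,
      HasDerivAt (fun t => 2 * t / 3 - t ^ 3 / 3 + t ^ 4 / 8) (M4 y) y := by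
    intro y hy
    rw [uIcc_of_le h0] at hy
    rw [M4_of_nonneg_of_le_one hy.1 (hy.2.trans h1)]
    exact (((((hasDerivAt_id y).const_mul 2).div_const 3).sub
      ((hasDerivAt_pow 3 y).div_const 3)).add ((hasDerivAt_pow 4 y).div_const 8)).congr_deriv
      (by norm_num; ring)
  rw [integral_eq_sub_of_hasDerivAt hderiv (continuous_M4.intervalIntegrable 0 x)]
  ring

lemma integral_M4_of_le_two {x : ℝ} (h1 : 1 ≤ x) (h2 : x ≤ 2) :
    ∫ y in 1..x, M4 y = (1 - (2 - x) ^ 4) / 24 := by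
  have hderiv : ∀ y ∈ uIcc 1 x, HasDerivAt (fun t => -(2 - t) ^ 4 / 24) (M4 y) y := by
    intro y hy
    rw [uIcc_of_le h1] at hy
    rw [M4_of_one_le_of_le_two hy.1 (hy.2.trans h2)]
    exact ((((hasDerivAt_id y).const_sub 2).pow 4).neg.div_const 24).congr_deriv
      (by norm_num; ring)
  rw [integral_eq_sub_of_hasDerivAt hderiv (continuous_M4.intervalIntegrable 1 x)]
  ring

lemma integral_id_mul_M4_of_le_one {x : ℝ} (h0 : 0 ≤ x) (h1 : x ≤ 1) :
    ∫ y in x..1, y * M4 y = 11 / 60 - (x ^ 2 / 3 - x ^ 4 / 4 + x ^ 5 / 10) := by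
  have hderiv : ∀ y ∈ uIcc x 1,
      HasDerivAt (fun t => t ^ 2 / 3 - t ^ 4 / 4 + t ^ 5 / 10) (y * M4 y) y := by
    intro y hy
    rw [uIcc_of_le h1] at hy
    rw [M4_of_nonneg_of_le_one (h0.trans hy.1) hy.2]
    exact ((((hasDerivAt_pow 2 y).div_const 3).sub ((hasDerivAt_pow 4 y).div_const 4)).add
      ((hasDerivAt_pow 5 y).div_const 10)).congr_deriv (by norm_num; ring)
  rw [integral_eq_sub_of_hasDerivAt hderiv
    ((continuous_id.mul continuous_M4).intervalIntegrable x 1)]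
  ring

lemma integral_id_mul_M4_of_le_two {x : ℝ} (h1 : 1 ≤ x) (h2 : x ≤ 2) :
    ∫ y in x..2, y * M4 y = (2 - x) ^ 4 / 12 - (2 - x) ^ 5 / 30 := by
  have hderiv : ∀ y ∈ uIcc x 2,
      HasDerivAt (fun t => (2 - t) ^ 5 / 30 - (2 - t) ^ 4 / 12) (y * M4 y) y := by
    intro y hy
    rw [uIcc_of_le h2] at hy
    rw [M4_of_one_le_of_le_two (h1.trans hy.1) hy.2]
    have hsub := (hasDerivAt_id y).const_sub 2
    exact (((hsub.pow 5).div_const 30).sub ((hsub.pow 4).div_const 12)).congr_deriv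
      (by norm_num; ring)
  rw [integral_eq_sub_of_hasDerivAt hderiv
    ((continuous_id.mul continuous_M4).intervalIntegrable x 2)]
  ring

lemma integral_mul_M4_eq_zero_of_two_le (g : ℝ → ℝ) {a b : ℝ} (ha : 2 ≤ a) (hb : 2 ≤ b) :
    ∫ y in a..b, g y * M4 y = 0 := by
  rw [← integral_zero (a := a) (b := b)]
  refine intervalIntegral.integral_congr fun y hy => ?_
  have hy2 : 2 ≤ y := le_min ha hb |>.trans hy.1
  simp only [M4_of_two_le_abs (hy2.trans (le_abs_self y)), mul_zero]

lemma integral_abs_sub_mul_M4_of_le_one {x : ℝ} (h0 : 0 ≤ x) (h1 : x ≤ 1) :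
    ∫ y, |x - y| * M4 y = (1 / 20) * x ^ 5 - (1 / 6) * x ^ 4 + (2 / 3) * x ^ 2 + 7 / 15 := by
  have hint : ∀ a b, IntervalIntegrable (fun y => y * M4 y) volume a b :=
    (continuous_id.mul continuous_M4).intervalIntegrable
  rw [integral_abs_sub_mul_M4_of_nonneg h0, integral_M4_of_le_one h0 h1,
    ← integral_add_adjacent_intervals (hint x 1) (hint 1 2),
    integral_id_mul_M4_of_le_one h0 h1, integral_id_mul_M4_of_le_two le_rfl one_le_two]
  ring

lemma integral_abs_sub_mul_M4_of_le_two {x : ℝ} (h1 : 1 ≤ x) (h2 : x ≤ 2) :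
    ∫ y, |x - y| * M4 y = (1 / 60) * (2 - x) ^ 5 + x := by
  rw [integral_abs_sub_mul_M4_of_nonneg (zero_le_one.trans h1),
    ← integral_add_adjacent_intervals (continuous_M4.intervalIntegrable 0 1)
      (continuous_M4.intervalIntegrable 1 x),
    integral_M4_of_le_one zero_le_one le_rfl, integral_M4_of_le_two h1 h2,
    integral_id_mul_M4_of_le_two h1 h2]
  ring

lemma integral_abs_sub_mul_M4_of_two_le {x : ℝ} (h2 : 2 ≤ x) :
    ∫ y, |x - y| * M4 y = x := by
  have hint : ∀ a b, IntervalIntegrable M4 volume a b := continuous_M4.intervalIntegrable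
  have htail := integral_mul_M4_eq_zero_of_two_le (fun _ => 1) le_rfl h2
  simp only [one_mul] at htail
  rw [integral_abs_sub_mul_M4_of_nonneg (zero_le_two.trans h2),
    ← integral_add_adjacent_intervals (hint 0 2) (hint 2 x),
    ← integral_add_adjacent_intervals (hint 0 1) (hint 1 2),
    integral_M4_of_le_one zero_le_one le_rfl, integral_M4_of_le_two one_le_two le_rfl, htail,
    integral_mul_M4_eq_zero_of_two_le (fun y => y) h2 le_rfl]
  ring

lemma integral_abs_neg_sub_mul_M4 (x : ℝ) :
    ∫ y, |-x - y| * M4 y = ∫ y, |x - y| * M4 y := by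
  rw [← integral_neg_eq_self]
  congr 1 with y
  rw [M4_neg, ← abs_neg]
  congr 2
  ring

theorem stmt_6 (x : ℝ) :
    (|x| ≤ 1 → (∫ y, |x - y| * M4 y)
        = (1 / 20) * |x| ^ 5 - (1 / 6) * x ^ 4 + (2 / 3) * x ^ 2 + 7 / 15) ∧
    (1 ≤ |x| → |x| ≤ 2 → (∫ y, |x - y| * M4 y)
        = (1 / 60) * (2 - |x|) ^ 5 + |x|) ∧
    (2 ≤ |x| → (∫ y, |x - y| * M4 y) = |x|) := by
  have habs : ∫ y, |x - y| * M4 y = ∫ y, |(|x|) - y| * M4 y := by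
    rcases abs_choice x with h | h <;> rw [h]
    exact (integral_abs_neg_sub_mul_M4 x).symm
  rw [habs, ← sq_abs x, ← (show Even 4 by decide).pow_abs x]
  exact ⟨integral_abs_sub_mul_M4_of_le_one (abs_nonneg x), integral_abs_sub_mul_M4_of_le_two,
    integral_abs_sub_mul_M4_of_two_le⟩
end

section
/- Consider the update x^{(k+1)} = x^{(k)} + τ (x^{(k)} − y)·F'(‖x^{(k)} − y‖)/‖x^{(k)} − y‖ with F = −(1/2)·abs, i.e., F'(s) = −1/2 for s > 0. If 0 < ‖y − x^{(0)}‖ < τ/2, then x^{(k)} = x^{(0)} for all even k and x^{(k)} = x^{(1)} for all odd k; in particular the sequence does not converge to y. -/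
/-!
Writing `u = x - y`, the iteration is `u ↦ (1 - c / ‖u‖) • u` with `c = τ / 2`. When
`0 < ‖u‖ < c` the factor is negative, so the step reflects `u` through `y` onto the point of
norm `c - ‖u‖`; that point again has norm below `c`, and the second step reflects it back
onto `u`. The orbit is therefore `2`-periodic, and a periodic sequence converges only if it is
constant, which `x 0 ≠ y` rules out.
-/

open Filter Topology

namespace Function.Periodic

variable {X : Type*} {x : ℕ → X} {n : ℕ}

theorem of_succ_eq {g : X → X} (hx : ∀ k, x (k + 1) = g (x k)) (hn : x n = x 0) :
    Periodic x n := by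
  intro k
  induction k with
  | zero => simpa using hn
  | succ k ih => rw [Nat.add_right_comm, hx, ih, hx]

theorem eq_of_tendsto [TopologicalSpace X] [T2Space X] (hx : Periodic x n) (hn : n ≠ 0) {y : X}
    (h : Tendsto x atTop (𝓝 y)) (k : ℕ) : x k = y := by
  have hshift : Tendsto (fun m : ℕ => k + m * n) atTop atTop :=
    tendsto_atTop_mono (fun m => le_add_left (Nat.le_mul_of_pos_right m (Nat.pos_of_ne_zero hn)))
      tendsto_id
  refine tendsto_nhds_unique tendsto_const_nhds ((h.comp hshift).congr fun m => ?_)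
  exact (hx.nat_mul m) k

end Function.Periodic

section RadialStep

variable {E : Type*} [NormedAddCommGroup E] [NormedSpace ℝ E]

/-- The gradient step of size `c` for `v ↦ ‖v‖`; at `v = 0` it is `0`, as `c / 0 = 0`. -/
noncomputable def radialStep (c : ℝ) (v : E) : E := v - (c / ‖v‖) • v

theorem radialStep_eq_smul (c : ℝ) (v : E) : radialStep c v = (1 - c / ‖v‖) • v := by
  rw [radialStep, sub_smul, one_smul]

theorem norm_radialStep {c : ℝ} {v : E} (hv : 0 < ‖v‖) (hc : ‖v‖ ≤ c) :
    ‖radialStep c v‖ = c - ‖v‖ := by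
  have hfactor : 1 - c / ‖v‖ ≤ 0 := by
    rw [sub_nonpos, le_div_iff₀ hv]
    linarith
  rw [radialStep_eq_smul, norm_smul, Real.norm_eq_abs, abs_of_nonpos hfactor]
  field_simp
  ring

theorem radialStep_radialStep {c : ℝ} {v : E} (hc : ‖v‖ < c) :
    radialStep c (radialStep c v) = v := by
  rcases (norm_nonneg v).eq_or_lt with hv | hv
  · simp [radialStep, norm_eq_zero.mp hv.symm]
  have hgap : c - ‖v‖ ≠ 0 := by linarith
  rw [radialStep_eq_smul c (radialStep c v), norm_radialStep hv hc.le, radialStep_eq_smul,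
    smul_smul]
  convert one_smul ℝ v using 2
  field_simp
  ring

end RadialStep

theorem stmt_18_general (d : ℕ) (τ : ℝ)
    (y : EuclideanSpace ℝ (Fin d)) (x : ℕ → EuclideanSpace ℝ (Fin d))
    (h0 : 0 < ‖y - x 0‖) (h0' : ‖y - x 0‖ < τ / 2)
    (hit : ∀ k : ℕ, x (k + 1)
      = x k + (τ * (-(1:ℝ) / 2) / ‖x k - y‖) • (x k - y)) :
    (∀ k : ℕ, Even k → x k = x 0) ∧
    (∀ k : ℕ, Odd k → x k = x 1) ∧
    ¬ Tendsto x atTop (nhds y) := by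
  rw [norm_sub_rev] at h0 h0'
  have hstep : ∀ k, x (k + 1) = y + radialStep (τ / 2) (x k - y) := by
    intro k
    rw [hit, radialStep, show τ * (-(1 : ℝ) / 2) / ‖x k - y‖ = -(τ / 2 / ‖x k - y‖) by ring,
      neg_smul]
    abel
  have hperiodic : Function.Periodic x 2 := by
    refine .of_succ_eq (g := fun w => y + radialStep (τ / 2) (w - y)) hstep ?_
    rw [hstep, hstep, add_sub_cancel_left, radialStep_radialStep h0', add_sub_cancel]
  refine ⟨fun k ⟨m, hk⟩ => ?_, fun k ⟨m, hk⟩ => ?_, fun hlim => ?_⟩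
  · rw [hk, ← two_mul, mul_comm]
    exact_mod_cast hperiodic.nat_mul_eq m
  · rw [hk, add_comm, mul_comm]
    exact hperiodic.nat_mul m 1
  · rw [hperiodic.eq_of_tendsto two_ne_zero hlim 0, sub_self, norm_zero] at h0
    exact h0.false

theorem stmt_18 (d : ℕ) (τ : ℝ) (hτ : 0 < τ)
    (y : EuclideanSpace ℝ (Fin d)) (x : ℕ → EuclideanSpace ℝ (Fin d))
    (h0 : 0 < ‖y - x 0‖) (h0' : ‖y - x 0‖ < τ / 2)
    (hit : ∀ k : ℕ, x (k + 1)
      = x k + (τ * (-(1:ℝ) / 2) / ‖x k - y‖) • (x k - y)) :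
    (∀ k : ℕ, Even k → x k = x 0) ∧
    (∀ k : ℕ, Odd k → x k = x 1) ∧
    ¬ Tendsto x atTop (nhds y) :=
  stmt_18_general d τ y x h0 h0' hit
end

section
/- Let F : ℝ → ℝ be even, twice continuously differentiable with F''(0) < 0, and let F̃(s) = F'(s)/s (extended by F''(0) at s = 0) be continuous and bounded. Then for all sufficiently small τ > 0 and initial point with ‖x^{(0)} − y‖ < τ, the iteration x^{(k+1)} = y + (x^{(k)} − y)(1 + τ F̃(‖x^{(k)} − y‖)) satisfies ‖x^{(k)} − y‖ ≤ ‖x^{(0)} − y‖ (1 + (τ/2) F''(0))^k, so x^{(k)} converges exponentially to y. -/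
/-!
Near `s = 0` the factor `F̃` stays below `F''(0)/2 < 0`, and it is bounded below by `-‖F̃‖_∞`.
Hence for `τ < min δ ‖F̃‖_∞⁻¹` the multiplier `1 + τ F̃(‖x⁽ᵏ⁾ - y‖)` lies in `[0, 1 + τ F''(0)/2]`
as long as `‖x⁽ᵏ⁾ - y‖ < τ`, and this bound is self-perpetuating: each step contracts the
distance to `y` by the factor `1 + τ F''(0)/2 ∈ [0, 1)`.
-/

open Filter Topology

section ScaledIteration

variable {E : Type*} [NormedAddCommGroup E] [NormedSpace ℝ E]

theorem norm_sub_le_mul_pow_of_iterate_smul {c : ℝ → ℝ} {ρ r : ℝ}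
    (hr : r ≤ 1) (hc : ∀ s, 0 ≤ s → s < ρ → |c s| ≤ r) {x : ℕ → E} {y : E}
    (hx0 : ‖x 0 - y‖ < ρ) (hx : ∀ k, x (k + 1) = y + c ‖x k - y‖ • (x k - y)) (k : ℕ) :
    ‖x k - y‖ ≤ ‖x 0 - y‖ * r ^ k := by
  have hr0 : 0 ≤ r := (abs_nonneg _).trans (hc _ le_rfl ((norm_nonneg _).trans_lt hx0))
  induction k with
  | zero => simp
  | succ k ih =>
    have hxk : ‖x k - y‖ < ρ :=
      calc ‖x k - y‖ ≤ ‖x 0 - y‖ * r ^ k := ih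
        _ ≤ ‖x 0 - y‖ := mul_le_of_le_one_right (norm_nonneg _) (pow_le_one₀ hr0 hr)
        _ < ρ := hx0
    calc ‖x (k + 1) - y‖ = |c ‖x k - y‖| * ‖x k - y‖ := by
          rw [hx k, add_sub_cancel_left, norm_smul, Real.norm_eq_abs]
      _ ≤ r * (‖x 0 - y‖ * r ^ k) :=
          mul_le_mul (hc _ (norm_nonneg _) hxk) ih (norm_nonneg _) hr0
      _ = ‖x 0 - y‖ * r ^ (k + 1) := by ring

end ScaledIteration

theorem tendsto_of_norm_sub_le_mul_pow {E : Type*} [SeminormedAddCommGroup E]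
    {x : ℕ → E} {y : E} {a r : ℝ} (hr0 : 0 ≤ r) (hr1 : r < 1)
    (h : ∀ k, ‖x k - y‖ ≤ a * r ^ k) : Tendsto x atTop (𝓝 y) := by
  rw [tendsto_iff_norm_sub_tendsto_zero]
  refine squeeze_zero (fun _ => norm_nonneg _) h ?_
  simpa using (tendsto_pow_atTop_nhds_zero_of_lt_one hr0 hr1).const_mul a

theorem abs_one_add_mul_le_one_add_mul {τ C a b : ℝ} (hτ : 0 ≤ τ) (hτC : τ * C ≤ 1)
    (ha : |a| ≤ C) (hab : a ≤ b) : |1 + τ * a| ≤ 1 + τ * b := by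
  have hCa : -C ≤ a := (abs_le.1 ha).1
  rw [abs_le]
  constructor <;> nlinarith

theorem stmt_19_general (d : ℕ) (F : ℝ → ℝ) (hF'' : deriv (deriv F) 0 < 0)
    (Ft : ℝ → ℝ) (hFt0 : Ft 0 = deriv (deriv F) 0)
    (hFtcont : Continuous Ft) (hFtbdd : ∃ C : ℝ, ∀ s : ℝ, |Ft s| ≤ C) :
    ∃ τ₀ : ℝ, 0 < τ₀ ∧ ∀ τ : ℝ, 0 < τ → τ < τ₀ →
      ∀ (y : EuclideanSpace ℝ (Fin d)) (x : ℕ → EuclideanSpace ℝ (Fin d)),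
        ‖x 0 - y‖ < τ →
        (∀ k : ℕ, x (k + 1) = y + (1 + τ * Ft ‖x k - y‖) • (x k - y)) →
        (∀ k : ℕ, ‖x k - y‖ ≤ ‖x 0 - y‖ * (1 + τ / 2 * deriv (deriv F) 0) ^ k) ∧
        Tendsto x atTop (nhds y) := by
  set A := deriv (deriv F) 0
  obtain ⟨C, hC⟩ := hFtbdd
  have hAC : |A| ≤ C := hFt0 ▸ hC 0
  have hCpos : 0 < C := (abs_pos.2 hF''.ne).trans_le hAC
  obtain ⟨δ, hδ, hFtδ⟩ : ∃ δ > 0, ∀ s, dist s 0 < δ → Ft s < A / 2 :=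
    Metric.eventually_nhds_iff.1 <| hFtcont.continuousAt.eventually <|
      gt_mem_nhds (by linarith [hFt0])
  refine ⟨min δ C⁻¹, lt_min hδ (inv_pos.2 hCpos), fun τ hτ hτ₀ y x hx0 hx => ?_⟩
  have hτδ : τ < δ := hτ₀.trans_le (min_le_left _ _)
  have hτC : τ * C ≤ 1 :=
    ((lt_div_iff₀ hCpos).1 (by rw [one_div]; exact hτ₀.trans_le (min_le_right _ _))).le
  have hr0 : 0 ≤ 1 + τ / 2 * A := by nlinarith [neg_abs_le A]
  have hr1 : 1 + τ / 2 * A < 1 := by nlinarith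
  have hc : ∀ s, 0 ≤ s → s < τ → |1 + τ * Ft s| ≤ 1 + τ / 2 * A := fun s hs hsτ => by
    have hFts : Ft s < A / 2 :=
      hFtδ s (by rw [Real.dist_0_eq_abs, abs_of_nonneg hs]; exact hsτ.trans hτδ)
    exact (abs_one_add_mul_le_one_add_mul hτ.le hτC (hC s) hFts.le).trans_eq (by ring)
  have hbound := norm_sub_le_mul_pow_of_iterate_smul hr1.le hc hx0 hx
  exact ⟨hbound, tendsto_of_norm_sub_le_mul_pow hr0 hr1 hbound⟩

theorem stmt_19 (d : ℕ) (F : ℝ → ℝ) (heven : ∀ s, F (-s) = F s)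
    (hC2 : ContDiff ℝ 2 F) (hF'' : deriv (deriv F) 0 < 0)
    (Ft : ℝ → ℝ) (hFt : ∀ s : ℝ, s ≠ 0 → Ft s = deriv F s / s)
    (hFt0 : Ft 0 = deriv (deriv F) 0)
    (hFtcont : Continuous Ft) (hFtbdd : ∃ C : ℝ, ∀ s : ℝ, |Ft s| ≤ C) :
    ∃ τ₀ : ℝ, 0 < τ₀ ∧ ∀ τ : ℝ, 0 < τ → τ < τ₀ →
      ∀ (y : EuclideanSpace ℝ (Fin d)) (x : ℕ → EuclideanSpace ℝ (Fin d)),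
        ‖x 0 - y‖ < τ →
        (∀ k : ℕ, x (k + 1) = y + (1 + τ * Ft ‖x k - y‖) • (x k - y)) →
        (∀ k : ℕ, ‖x k - y‖ ≤ ‖x 0 - y‖ * (1 + τ / 2 * deriv (deriv F) 0) ^ k) ∧
        Tendsto x atTop (nhds y) :=
  stmt_19_general d F hF'' Ft hFt0 hFtcont hFtbdd
end
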